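/- (First assertion of Lemma 3.3: C^flip is a chain complex.) Let an arrow system (ι, M, c, r) with differential ∂ be given, together with an Alexander grading A for it. If ∂ ∘ ∂ = 0, then the flipped differential also satisfies ∂^flip ∘ ∂^flip = 0. -/
import Mathlib


/-- The differential of an arrow system: the `𝔽₂[U]`-linear endomorphism of the free
module `ι →₀ 𝔽₂[U]` determined on basis elements by
`∂ x = ∑ y, (c x y) • U ^ (r x y) • y`. -/
noncomputable def arrowDiff {ι : Type*} [Fintype ι]
    (c : ι → ι → ZMod 2) (r : ι → ι → ℕ) :
    (ι →₀ Polynomial (ZMod 2)) →ₗ[Polynomial (ZMod 2)] (ι →₀ Polynomial (ZMod 2)) :=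
  Finsupp.lsum (Polynomial (ZMod 2)) fun x =>
    LinearMap.toSpanSingleton (Polynomial (ZMod 2)) _
      (∑ y, Finsupp.single y (Polynomial.C (c x y) * Polynomial.X ^ (r x y)))

open Polynomial in
lemma arrowDiff_single {ι : Type*} [Fintype ι]
    (c : ι → ι → ZMod 2) (r : ι → ι → ℕ) (x : ι) :
    arrowDiff c r (Finsupp.single x 1) =
      ∑ y, Finsupp.single y (C (c x y) * X ^ (r x y)) := by
  simp [arrowDiff]

open Polynomial in
lemma comp_single {ι : Type*} [Fintype ι]
    (c : ι → ι → ZMod 2) (r : ι → ι → ℕ) (x : ι) :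
    (arrowDiff c r ∘ₗ arrowDiff c r) (Finsupp.single x 1) =
      ∑ z, Finsupp.single z (∑ y, C (c x y) * C (c y z) * X ^ (r x y + r y z)) := by
  rw [LinearMap.comp_apply, arrowDiff_single, map_sum]
  have : ∀ y : ι, arrowDiff c r (Finsupp.single y (C (c x y) * X ^ (r x y))) =
      ∑ z, Finsupp.single z (C (c x y) * C (c y z) * X ^ (r x y + r y z)) := by
    intro y
    rw [arrowDiff, Finsupp.lsum_single, LinearMap.toSpanSingleton_apply, Finset.smul_sum]
    refine Finset.sum_congr rfl fun z _ => ?_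
    rw [Finsupp.smul_single, smul_eq_mul, pow_add]
    ring_nf
  simp_rw [this]
  rw [Finset.sum_comm]
  congr 1
  ext z
  rw [← Finsupp.single_finset_sum]

open Polynomial

/-- If the differential of an arrow system with an Alexander grading squares to zero,
then so does the flipped differential, whose `U`-exponents are
`r^flip x y = ((r x y : ℤ) + A x - A y).toNat`. -/
theorem flip_diff_comp_self_eq_zero
    {ι : Type*} [Fintype ι] (M : ι → ℤ) (c : ι → ι → ZMod 2) (r : ι → ι → ℕ)
    (A : ι → ℤ)
    (hM : ∀ x y, c x y ≠ 0 → M x - M y = 1 - 2 * (r x y : ℤ))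
    (hA : ∀ x y, c x y ≠ 0 → 0 ≤ (r x y : ℤ) + A x - A y)
    (h2 : arrowDiff c r ∘ₗ arrowDiff c r = 0) :
    arrowDiff c (fun x y => ((r x y : ℤ) + A x - A y).toNat) ∘ₗ
      arrowDiff c (fun x y => ((r x y : ℤ) + A x - A y).toNat) = 0 := by
  let r' : ι → ι → ℕ := fun x y => ((r x y : ℤ) + A x - A y).toNat
  show arrowDiff c r' ∘ₗ arrowDiff c r' = 0
  have key : ∀ x z : ι, (∑ y, C (c x y) * C (c y z) * X ^ (r x y + r y z)) = 0 := by
    classical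
    intro x z
    have h := LinearMap.congr_fun h2 (Finsupp.single x 1)
    rw [comp_single] at h
    have := congrArg (fun f : ι →₀ (ZMod 2)[X] => f z) h
    simpa [Finset.sum_apply', Finsupp.single_apply] using this
  have key' : ∀ x z : ι, (∑ y, C (c x y) * C (c y z) * X ^ (r' x y + r' y z)) = 0 := by
    intro x z
    have hXb : (X : (ZMod 2)[X]) ^ ((A z - A x).toNat) ≠ 0 := pow_ne_zero _ X_ne_zero
    have hmul : (∑ y, C (c x y) * C (c y z) * X ^ (r' x y + r' y z))
        * X ^ ((A z - A x).toNat) = 0 := by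
      rw [Finset.sum_mul]
      have e : ∀ y ∈ Finset.univ,
          C (c x y) * C (c y z) * X ^ (r' x y + r' y z) * X ^ ((A z - A x).toNat)
          = C (c x y) * C (c y z) * X ^ (r x y + r y z) * X ^ ((A x - A z).toNat) := by
        intro y _
        by_cases hxy : c x y = 0
        · simp [hxy]
        by_cases hyz : c y z = 0
        · simp [hyz]
        have h1 := hA x y hxy
        have h2 := hA y z hyz
        have hexp : r' x y + r' y z + (A z - A x).toNat
            = r x y + r y z + (A x - A z).toNat := by
          show ((r x y : ℤ) + A x - A y).toNat + ((r y z : ℤ) + A y - A z).toNat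
              + (A z - A x).toNat = r x y + r y z + (A x - A z).toNat
          omega
        rw [mul_assoc, ← pow_add, hexp, pow_add, ← mul_assoc]
      rw [Finset.sum_congr rfl e, ← Finset.sum_mul, key x z, zero_mul]
    exact (mul_eq_zero.mp hmul).resolve_right hXb
  ext x
  simp only [LinearMap.comp_apply, LinearMap.zero_apply, Finsupp.lsingle_apply]
  rw [← LinearMap.comp_apply, comp_single, Finset.sum_eq_zero]
  intro z _
  rw [key', Finsupp.single_zero]
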